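/- Given distinct points x_0,…,x_n ∈ ℂ with n ≥ 2, and 2 ≤ ℓ ≤ n−2, one has Σ_{k=ℓ}^{n−2} D_ℓ^k(P_2^k)·D_k^k(P_{k+1}^{k+1})·D_k^{n−1}(P_{k+2}^n) + D_ℓ^{n−1}(P_2^{n−1})·D_{n−1}^{n−1}(P_n^n) = D_ℓ^{n−1}(P_2^n). -/

import Mathlib

/-- Auxiliary: divided difference over points `x m, …, x (m+g)`. -/
noncomputable def ddAux (x : ℕ → ℂ) (f : ℂ → ℂ) : ℕ → ℕ → ℂ
  | 0, m => f (x m)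
  | g + 1, m => (ddAux x f g m - ddAux x f g (m + 1)) / (x m - x (m + (g + 1)))

/-- Newton divided difference `[x_m, …, x_j] f`. -/
noncomputable def dd (x : ℕ → ℂ) (f : ℂ → ℂ) (m j : ℕ) : ℂ := ddAux x f (j - m) m

/-- Modified divided difference `⟨x_m, …, x_j⟩ f`. -/
noncomputable def mdd (x : ℕ → ℂ) (f : ℂ → ℂ) (m j : ℕ) : ℂ :=
  if m < j then
    (x m + x (m + 1)) *
      dd x (fun z => f z * ∏ k ∈ Finset.Icc (m + 2) j, (x k + z)) m j
  else f (x j)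

/-!
The factors `D_k^{n-1}(P_{k+2}^n)` equal `1`: a divided difference of order `g` of a monic
polynomial of degree `g` is its leading coefficient. What remains is the sum
`Σ_{k=ℓ}^{n-1} (x_k + x_{k+1}) D_ℓ^k(P_2^k)`, which telescopes by the Leibniz rule for a linear
factor, `[x_ℓ,…,x_{k+1}](f·(c + z)) = (c + x_{k+1})·[x_ℓ,…,x_{k+1}]f + [x_ℓ,…,x_k]f`.
-/

open Finset

section

variable {x : ℕ → ℂ}

lemma ddAux_const (c : ℂ) (g m : ℕ) : ddAux x (fun _ => c) g m = if g = 0 then c else 0 := by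
  induction g generalizing m with
  | zero => rfl
  | succ g ih => simp [ddAux, ih]

lemma ddAux_succ_mul_add (f : ℂ → ℂ) (c : ℂ) {g m : ℕ}
    (hx : Set.InjOn x (Set.Icc m (m + (g + 1)))) :
    ddAux x (fun z => f z * (c + z)) (g + 1) m
      = (c + x (m + (g + 1))) * ddAux x f (g + 1) m + ddAux x f g m := by
  have hne : ∀ d, 0 < d → d ≤ g + 1 → x m - x (m + d) ≠ 0 := fun d hd hdg =>
    sub_ne_zero.mpr <| hx.ne (by simp) (by simp; omega) (by omega)
  induction g generalizing m with
  | zero =>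
    have h₁ := hne 1 one_pos le_rfl
    simp only [ddAux]
    field_simp
    ring
  | succ g ih =>
    have hA : ddAux x f (g + 1) m * (x m - x (m + (g + 1)))
        = ddAux x f g m - ddAux x f g (m + 1) :=
      div_mul_cancel₀ _ (hne _ (by omega) (by omega))
    have hA' : ddAux x f (g + 1 + 1) m * (x m - x (m + (g + 1 + 1)))
        = ddAux x f (g + 1) m - ddAux x f (g + 1) (m + 1) :=
      div_mul_cancel₀ _ (hne _ (by omega) le_rfl)
    have ih₀ := ih (hx.mono (Set.Icc_subset_Icc_right (by omega))) fun d hd hdg => hne d hd (by omega)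
    have ih₁ := ih (m := m + 1) (hx.mono (Set.Icc_subset_Icc (by omega) (by omega))) fun d hd hdg =>
      sub_ne_zero.mpr <| hx.ne (by simp) (by simp; omega) (by omega)
    rw [show m + 1 + (g + 1) = m + (g + 1 + 1) by omega] at ih₁
    rw [ddAux, ih₀, ih₁, div_eq_iff (hne _ (by omega) le_rfl)]
    linear_combination (-(c + x (m + (g + 1 + 1)))) * hA' - hA

lemma ddAux_prod_add {ι : Type*} (c : ι → ℂ) (s : Finset ι) {g m : ℕ} (hs : s.card ≤ g)
    (hx : Set.InjOn x (Set.Icc m (m + g))) :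
    ddAux x (fun z => ∏ i ∈ s, (c i + z)) g m = if s.card = g then 1 else 0 := by
  induction s using Finset.cons_induction generalizing g with
  | empty => simp [ddAux_const, eq_comm]
  | cons a s ha ih =>
    obtain ⟨g, rfl⟩ : ∃ g', g = g' + 1 := ⟨g - 1, by rw [card_cons] at hs; omega⟩
    rw [card_cons] at hs ⊢
    simp_rw [prod_cons, mul_comm (c a + _)]
    rw [ddAux_succ_mul_add _ _ hx, ih (by omega) hx,
      ih (by omega) (hx.mono (Set.Icc_subset_Icc_right (by omega)))]
    simp [show s.card ≠ g + 1 by omega]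

lemma dd_self (f : ℂ → ℂ) (m : ℕ) : dd x f m m = f (x m) := by
  rw [dd, Nat.sub_self]; rfl

lemma dd_succ_mul_add (f : ℂ → ℂ) (c : ℂ) {m j : ℕ} (hmj : m ≤ j)
    (hx : Set.InjOn x (Set.Icc m (j + 1))) :
    dd x (fun z => f z * (c + z)) m (j + 1) = (c + x (j + 1)) * dd x f m (j + 1) + dd x f m j := by
  obtain ⟨g, rfl⟩ := Nat.exists_eq_add_of_le hmj
  simp only [dd, Nat.add_sub_cancel_left, add_assoc] at hx ⊢
  exact ddAux_succ_mul_add f c hx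

lemma dd_prod_add_eq_one {ι : Type*} (c : ι → ℂ) (s : Finset ι) {m j : ℕ}
    (hs : s.card = j - m) (hx : Set.InjOn x (Set.Icc m j)) :
    dd x (fun z => ∏ i ∈ s, (c i + z)) m j = 1 := by
  have hx' : Set.InjOn x (Set.Icc m (m + (j - m))) := by
    rcases le_total m j with h | h
    · rwa [Nat.add_sub_cancel' h]
    · simp [Nat.sub_eq_zero_of_le h]
  rw [dd, ddAux_prod_add c s hs.le hx', if_pos hs]

lemma sum_Icc_mul_dd_prod (c : ℕ → ℂ) {a ℓ m : ℕ} (ha : a ≤ ℓ + 1) (hℓm : ℓ ≤ m)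
    (hx : Set.InjOn x (Set.Icc ℓ m)) :
    ∑ k ∈ Finset.Icc ℓ m, (x k + c (k + 1)) * dd x (fun z => ∏ i ∈ Finset.Icc a k, (c i + z)) ℓ k
      = dd x (fun z => ∏ i ∈ Finset.Icc a (m + 1), (c i + z)) ℓ m := by
  induction m, hℓm using Nat.le_induction with
  | base =>
    rw [Finset.Icc_self, sum_singleton, dd_self, dd_self, prod_Icc_succ_top ha]
    ring
  | succ m hℓm ih =>
    rw [sum_Icc_succ_top (by omega), ih (hx.mono (Set.Icc_subset_Icc_right (by omega)))]
    simp_rw [prod_Icc_succ_top (show a ≤ m + 1 + 1 by omega)]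
    rw [dd_succ_mul_add _ _ hℓm hx]
    ring

end

theorem dd_prod_identity_end_general (x : ℕ → ℂ) (n : ℕ)
    (hdist : ∀ i j, i ≤ n → j ≤ n → i ≠ j → x i ≠ x j)
    (P : ℕ → ℕ → ℂ → ℂ)
    (hP : ∀ m j z, P m j z = ∏ k ∈ Finset.Icc m j, (x k + z)) :
    ∀ ℓ, 2 ≤ ℓ → ℓ ≤ n - 2 →
      (∑ k ∈ Finset.Icc ℓ (n - 2),
          dd x (P 2 k) ℓ k * dd x (P (k + 1) (k + 1)) k k * dd x (P (k + 2) n) k (n - 1))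
        + dd x (P 2 (n - 1)) ℓ (n - 1) * dd x (P n n) (n - 1) (n - 1)
      = dd x (P 2 n) ℓ (n - 1) := by
  intro ℓ hℓ hℓn
  obtain ⟨M, rfl⟩ : ∃ M, n = M + 2 := ⟨n - 2, by omega⟩
  obtain rfl : P = fun m j z => ∏ k ∈ Finset.Icc m j, (x k + z) := by
    funext m j z; exact hP m j z
  have hinj : Set.InjOn x (Set.Iic (M + 2)) := fun i hi j hj hij => by
    by_contra h; exact hdist i j hi hj h hij
  have hlin : ∀ k, dd x (fun z => ∏ i ∈ Finset.Icc (k + 1) (k + 1), (x i + z)) k k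
      = x k + x (k + 1) := fun k => by
    rw [dd_self, Finset.Icc_self, Finset.prod_singleton, add_comm]
  have hone : ∀ k,
      dd x (fun z => ∏ i ∈ Finset.Icc (k + 2) (M + 2), (x i + z)) k (M + 1) = 1 := fun k =>
    dd_prod_add_eq_one x _ (by rw [Nat.card_Icc]; omega)
      (hinj.mono (Set.Icc_subset_Iic_self.trans (Set.Iic_subset_Iic.mpr (by omega))))
  simp only [Nat.add_sub_cancel, show M + 2 - 1 = M + 1 by omega]
  rw [sum_congr rfl fun k _ => by rw [hlin, hone, mul_one, mul_comm], hlin, mul_comm,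
    ← sum_Icc_succ_top (by omega) fun k => (x k + x (k + 1)) * dd x _ ℓ k]
  exact sum_Icc_mul_dd_prod x (by omega) (by omega)
    (hinj.mono (Set.Icc_subset_Iic_self.trans (Set.Iic_subset_Iic.mpr (by omega))))

/-- First identity of the technical lemma for modified divided differences. -/
theorem dd_prod_identity_end (x : ℕ → ℂ) (n : ℕ) (hn : 2 ≤ n)
    (hdist : ∀ i j, i ≤ n → j ≤ n → i ≠ j → x i ≠ x j)
    (P : ℕ → ℕ → ℂ → ℂ)
    (hP : ∀ m j z, P m j z = ∏ k ∈ Finset.Icc m j, (x k + z)) :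
    ∀ ℓ, 2 ≤ ℓ → ℓ ≤ n - 2 →
      (∑ k ∈ Finset.Icc ℓ (n - 2),
          dd x (P 2 k) ℓ k * dd x (P (k + 1) (k + 1)) k k * dd x (P (k + 2) n) k (n - 1))
        + dd x (P 2 (n - 1)) ℓ (n - 1) * dd x (P n n) (n - 1) (n - 1)
      = dd x (P 2 n) ℓ (n - 1) :=
  dd_prod_identity_end_general x n hdist P hP
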